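/- In the free group F₂ on g and h, let v be any word in which g^{±1} alternates with powers of h (each h-power having nonzero exponent). Then for any integer p with |p| ≥ 2, in the reduced form of the product v · gᵖ (or gᵖ · v⁻¹), at least one letter g of the power gᵖ remains; i.e., a word of this alternating form can never cancel a power gᵖ with |p| ≥ 2 entirely. -/

import Mathlib

/-!
A reduced word in which no two consecutive letters are `g`-letters begins with at most one letter
`g^{±1}`. Multiplying `gᵖ` (`|p| ≥ 2`) on its left therefore cancels at most one letter of the
power and leaves at least one `g^{sign p}` in front. The statement about `v * gᵖ` is the
inverse of the one about `g⁻ᵖ * v⁻¹`, and the alternation condition is symmetric under inversion.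
-/

namespace Stmt19

abbrev F2 := FreeGroup (Fin 2)

def g : F2 := FreeGroup.of 0
def h : F2 := FreeGroup.of 1

/-- a word in which `g^{±1}` alternates with (nonzero) powers of `h`. -/
def AltGwithHpowers (w : F2) : Prop :=
  List.Chain' (fun a b : Fin 2 × Bool => ¬(a.1 = 0 ∧ b.1 = 0)) w.toWord

end Stmt19

namespace FreeGroup

variable {α : Type*}

theorem toWord_of_zpow [DecidableEq α] (a : α) (p : ℤ) :
    (of a ^ p).toWord = List.replicate p.natAbs (a, decide (0 < p)) := by
  obtain ⟨n, rfl | rfl⟩ := Int.eq_nat_or_neg p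
  · rcases n.eq_zero_or_pos with rfl | hn
    · simp
    · simp [toWord_of_pow, hn]
  · simp [toWord_inv, toWord_of_pow, invRev, List.map_replicate]

theorem IsReduced.replicate_append {x : α × Bool} {u : List (α × Bool)}
    (h : IsReduced (x :: u)) (n : ℕ) : IsReduced (List.replicate n x ++ u) := by
  cases n with
  | zero => exact h.infix (List.suffix_cons x u).isInfix
  | succ n =>
    have hrep : IsReduced (List.replicate (n + 1) x) :=
      List.isChain_replicate_of_rel _ fun _ => rfl
    rw [List.replicate_succ'] at hrep ⊢
    exact hrep.append_overlap h (List.cons_ne_nil x [])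

theorem IsReduced.cons {a : α} {b : Bool} {u : List (α × Bool)} (hu : IsReduced u)
    (hhead : u.head? ≠ some (a, !b)) : IsReduced ((a, b) :: u) := by
  rcases u with _ | ⟨⟨c, d⟩, u⟩
  · exact IsReduced.singleton
  · refine isReduced_cons_cons.2 ⟨?_, hu⟩
    rintro (rfl : a = c)
    by_contra hbd
    obtain rfl : d = !b := Bool.eq_not.2 (Ne.symm hbd)
    exact hhead rfl

theorem head?_reduce_replicate_append [DecidableEq α] {a : α} {b : Bool} {n : ℕ} (hn : 2 ≤ n)
    {u : List (α × Bool)} (hu : IsReduced u) (hprefix : ¬[(a, !b), (a, !b)] <+: u) :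
    (reduce (List.replicate n (a, b) ++ u)).head? = some (a, b) := by
  obtain ⟨m, rfl⟩ : ∃ m, n = m + 2 := ⟨n - 2, by omega⟩
  by_cases hcancel : u.head? = some (a, !b)
  · obtain ⟨u', rfl⟩ := List.head?_eq_some_iff.1 hcancel
    have hu' : IsReduced ((a, b) :: u') := by
      refine IsReduced.cons (hu.infix (List.suffix_cons _ u').isInfix) fun hhead => hprefix ?_
      obtain ⟨u'', rfl⟩ := List.head?_eq_some_iff.1 hhead
      exact ⟨u'', rfl⟩
    have hstep : Red.Step (List.replicate (m + 2) (a, b) ++ (a, !b) :: u')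
        (List.replicate (m + 1) (a, b) ++ u') := by
      simpa [List.replicate_succ'] using
        (Red.Step.not : Red.Step (List.replicate (m + 1) (a, b) ++ (a, b) :: (a, !b) :: u') _)
    rw [reduce.Step.eq hstep, (hu'.replicate_append (m + 1)).reduce_eq]
    simp [List.replicate_succ]
  · rw [((hu.cons hcancel).replicate_append (m + 2)).reduce_eq]
    simp [List.replicate_succ]

end FreeGroup

namespace Stmt19

open FreeGroup

theorem AltGwithHpowers.inv {w : F2} (hw : AltGwithHpowers w) : AltGwithHpowers w⁻¹ := by
  rw [AltGwithHpowers, toWord_inv, invRev, List.Chain', List.isChain_reverse, List.isChain_map]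
  exact hw.imp fun _ _ hab hba => hab hba.symm

theorem AltGwithHpowers.not_prefix {w : F2} (hw : AltGwithHpowers w) (c : Bool) :
    ¬[((0 : Fin 2), c), (0, c)] <+: w.toWord := by
  rintro ⟨t, ht⟩
  rw [AltGwithHpowers, ← ht] at hw
  exact (List.isChain_cons_cons.1 hw).1 ⟨rfl, rfl⟩

theorem head?_toWord_g_zpow_mul {w : F2} (hw : AltGwithHpowers w) {p : ℤ} (hp : 2 ≤ |p|) :
    (g ^ p * w).toWord.head? = some (0, decide (0 < p)) := by
  rw [toWord_mul, g, toWord_of_zpow]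
  have hn : 2 ≤ p.natAbs := by rw [Int.abs_eq_natAbs] at hp; omega
  exact head?_reduce_replicate_append hn isReduced_toWord (hw.not_prefix _)

theorem stmt_19 (v : F2) (hv : AltGwithHpowers v) (p : ℤ) (hp : 2 ≤ |p|) :
    (v * g ^ p).toWord.getLast? = some (0, decide (0 < p)) ∧
      (g ^ p * v⁻¹).toWord.head? = some (0, decide (0 < p)) := by
  refine ⟨?_, head?_toWord_g_zpow_mul hv.inv hp⟩
  have hinv : v * g ^ p = (g ^ (-p) * v⁻¹)⁻¹ := by group
  rw [hinv, toWord_inv, invRev, List.getLast?_reverse, List.head?_map,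
    head?_toWord_g_zpow_mul hv.inv (by rwa [abs_neg])]
  have hp0 : p ≠ 0 := by rintro rfl; simp at hp
  rcases hp0.lt_or_gt with hneg | hpos
  · simp [hneg, hneg.not_gt]
  · simp [hpos, hpos.le]

end Stmt19
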